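/- In Cl(ℝ³), a multivector M = a + v + jw + jt fails to be invertible if and only if (v + jw)² = (a + jt)², i.e. a² + w² = v² + t² and at = v·w. -/

import Mathlib

/-!
Write `M = z + F` with `z = a + t j` in the copy `ℝ[j] ≅ ℂ` of the complex numbers, which is
central because `j` commutes with every vector, and `F = v + j w`. Then
`F² = (v² - w²) + 2 (v·w) j` lies in `ℝ[j]` as well, so
`(z + F)(z - F) = (z - F)(z + F) = z² - F²` and `M` is invertible as soon as `z² ≠ F²`.
Conversely, under the Pauli representation `Cl(ℝ³) → M₂(ℂ)`, in which `j` acts as `i`,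
the determinant of `M` is `z² - F²`, so `z² = F²` rules out invertibility.
-/

noncomputable section
open CliffordAlgebra

/-- The Euclidean quadratic form on `ℝ³`. -/
def Q3 : QuadraticForm ℝ (Fin 3 → ℝ) :=
  QuadraticMap.weightedSumSquares ℝ (fun _ : Fin 3 => (1 : ℝ))

/-- The Clifford algebra `Cl(ℝ³)`. -/
abbrev Cl3 := CliffordAlgebra Q3

/-- The orthonormal basis vectors `e₁, e₂, e₃` of `Cl(ℝ³)`. -/
def e (i : Fin 3) : Cl3 := ι Q3 (Pi.single i 1)

/-- The pseudoscalar `j = e₁e₂e₃` of `Cl(ℝ³)`. -/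
def jj : Cl3 := e 0 * e 1 * e 2

theorem isUnit_add_of_mul_self_eq {K A F : Type*} [Field K] [Ring A] [FunLike F K A]
    [RingHomClass F K A] (f : F) {c b : K} {x : A} (hx : x * x = f b)
    (hc : Commute (f c) x) (hcb : c ^ 2 ≠ b) : IsUnit (f c + x) := by
  have hu : IsUnit (f (c ^ 2 - b)) := (sub_ne_zero.mpr hcb).isUnit.map f
  have hconj : (f c + x) * (f c - x) = f (c ^ 2 - b) := by
    rw [map_sub, map_pow, ← hx, add_mul, mul_sub, mul_sub, hc.eq]; noncomm_ring
  have hconj' : (f c - x) * (f c + x) = f (c ^ 2 - b) := by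
    rw [map_sub, map_pow, ← hx, sub_mul, mul_add, mul_add, hc.eq]; noncomm_ring
  refine isUnit_iff_exists_and_exists.mpr
    ⟨⟨(f c - x) * ↑hu.unit⁻¹, ?_⟩, ⟨↑hu.unit⁻¹ * (f c - x), ?_⟩⟩
  · rw [← mul_assoc, hconj, hu.mul_val_inv]
  · rw [mul_assoc, hconj', hu.val_inv_mul]

section
variable {R M : Type*} [CommRing R] [AddCommGroup M] [Module R M] {Q : QuadraticForm R M}

theorem ι_add_mul_ι_mul_self {j : CliffordAlgebra Q} (hj : j * j = -1)
    (hjι : ∀ x, Commute j (ι Q x)) (v w : M) :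
    (ι Q v + j * ι Q w) * (ι Q v + j * ι Q w) =
      algebraMap R _ (Q v - Q w) + QuadraticMap.polar Q v w • j := by
  have hvjw : ι Q v * (j * ι Q w) = ι Q v * ι Q w * j := by rw [(hjι w).eq, mul_assoc]
  have hjwv : j * ι Q w * ι Q v = ι Q w * ι Q v * j := by
    rw [(hjι w).eq, mul_assoc, (hjι v).eq, mul_assoc]
  have hjw : j * ι Q w * (j * ι Q w) = -algebraMap R _ (Q w) := by
    rw [(hjι w).symm.mul_mul_mul_comm, hj, ι_sq_scalar, neg_one_mul]
  rw [Algebra.smul_def, ← ι_mul_ι_add_swap, map_sub, add_mul, mul_add, mul_add, ι_sq_scalar,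
    hvjw, hjwv, hjw, add_mul]
  abel
end

lemma Q3_apply (x : Fin 3 → ℝ) : Q3 x = x ⬝ᵥ x := by
  simp [Q3, QuadraticMap.weightedSumSquares_apply, dotProduct]

lemma polar_Q3 (x y : Fin 3 → ℝ) : QuadraticMap.polar Q3 x y = 2 * x ⬝ᵥ y := by
  simp only [QuadraticMap.polar, Q3_apply, add_dotProduct, dotProduct_add, dotProduct_comm y x]
  ring

lemma e_mul_self (i : Fin 3) : e i * e i = 1 := by
  rw [e, ι_sq_scalar, Q3_apply]; simp

lemma isOrtho_Q3_single {i k : Fin 3} (h : i ≠ k) :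
    Q3.IsOrtho (Pi.single i 1) (Pi.single k 1) := by
  rw [← QuadraticMap.isOrtho_polarBilin, QuadraticMap.polarBilin_apply_apply, polar_Q3,
    single_dotProduct, Pi.single_eq_of_ne h, mul_zero, mul_zero]

lemma e_mul_e_of_lt {i k : Fin 3} (h : k < i) : e i * e k = -(e k * e i) :=
  ι_mul_ι_comm_of_isOrtho (isOrtho_Q3_single h.ne')

lemma e_mul_e_mul_of_lt {i k : Fin 3} (h : k < i) (x : Cl3) :
    e i * (e k * x) = -(e k * (e i * x)) :=
  ι_mul_ι_mul_of_isOrtho x (isOrtho_Q3_single h.ne')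

lemma e_mul_e_mul_self (i : Fin 3) (x : Cl3) : e i * (e i * x) = x := by
  rw [← mul_assoc, e_mul_self, one_mul]

lemma jj_mul_self : jj * jj = -1 := by
  simp [jj, mul_assoc, e_mul_e_mul_of_lt, e_mul_self]

lemma commute_jj_e (i : Fin 3) : Commute jj (e i) := by
  fin_cases i <;>
    simp [Commute, SemiconjBy, jj, mul_assoc, e_mul_e_of_lt, e_mul_e_mul_of_lt, e_mul_self,
      e_mul_e_mul_self]

lemma commute_jj_ι (x : Fin 3 → ℝ) : Commute jj (ι Q3 x) := by
  have : (LinearMap.mulLeft ℝ jj).comp (ι Q3) = (LinearMap.mulRight ℝ jj).comp (ι Q3) := by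
    ext i
    exact commute_jj_e i
  exact LinearMap.congr_fun this x

def ofComplex : ℂ →ₐ[ℝ] Cl3 := Complex.liftAux jj jj_mul_self

lemma ofComplex_I : ofComplex Complex.I = jj := Complex.liftAux_apply_I _ _

lemma commute_ofComplex_ι (z : ℂ) (x : Fin 3 → ℝ) : Commute (ofComplex z) (ι Q3 x) := by
  rw [ofComplex, Complex.liftAux_apply]
  exact (Algebra.commute_algebraMap_left _ _).add_left ((commute_jj_ι x).smul_left _)

lemma ι_add_jj_mul_ι_mul_self (v w : Fin 3 → ℝ) :
    (ι Q3 v + jj * ι Q3 w) * (ι Q3 v + jj * ι Q3 w) =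
      ofComplex ⟨Q3 v - Q3 w, QuadraticMap.polar Q3 v w⟩ := by
  rw [ι_add_mul_ι_mul_self jj_mul_self commute_jj_ι, ofComplex, Complex.liftAux_apply]

lemma commute_ofComplex_ι_add_jj_mul_ι (z : ℂ) (v w : Fin 3 → ℝ) :
    Commute (ofComplex z) (ι Q3 v + jj * ι Q3 w) :=
  (commute_ofComplex_ι z v).add_right
    ((ofComplex_I ▸ (Commute.all z _).map ofComplex).mul_right (commute_ofComplex_ι z w))

open Complex in
def pauliMatrix : Fin 3 → Matrix (Fin 2) (Fin 2) ℂ :=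
  ![!![0, 1; 1, 0], !![0, -I; I, 0], !![1, 0; 0, -1]]

def pauli : (Fin 3 → ℝ) →ₗ[ℝ] Matrix (Fin 2) (Fin 2) ℂ :=
  Fintype.linearCombination ℝ pauliMatrix

open Complex in
lemma pauli_apply (x : Fin 3 → ℝ) :
    pauli x = !![(x 2 : ℂ), x 0 - x 1 * I; x 0 + x 1 * I, -x 2] := by
  ext i j
  fin_cases i <;> fin_cases j <;>
    simp [pauli, pauliMatrix, Fintype.linearCombination_apply, Fin.sum_univ_three,
      Complex.real_smul, sub_eq_add_neg]

lemma pauli_mul_self (x : Fin 3 → ℝ) : pauli x * pauli x = algebraMap ℝ _ (Q3 x) := by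
  rw [pauli_apply, Matrix.mul_fin_two, Q3_apply, Matrix.algebraMap_eq_diagonal,
    Matrix.diagonal_fin_two]
  simp only [EmbeddingLike.apply_eq_iff_eq, Matrix.vecCons_inj, and_true, Pi.algebraMap_apply,
    Complex.coe_algebraMap, dotProduct, Fin.sum_univ_three, Complex.ofReal_add, Complex.ofReal_mul]
  refine ⟨⟨?_, ?_⟩, ?_, ?_⟩
  · linear_combination (-(x 1 : ℂ) ^ 2) * Complex.I_sq
  · ring
  · ring
  · linear_combination (-(x 1 : ℂ) ^ 2) * Complex.I_sq

def toPauli : Cl3 →ₐ[ℝ] Matrix (Fin 2) (Fin 2) ℂ := lift Q3 ⟨pauli, pauli_mul_self⟩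

lemma toPauli_ι (x : Fin 3 → ℝ) : toPauli (ι Q3 x) = pauli x := lift_ι_apply _ _ _

lemma toPauli_jj : toPauli jj = !![Complex.I, 0; 0, Complex.I] := by
  simp [jj, e, toPauli_ι, pauli_apply]

lemma toPauli_ofComplex (z : ℂ) : toPauli (ofComplex z) = !![z, 0; 0, z] := by
  rw [ofComplex, Complex.liftAux_apply, map_add, map_smul, AlgHom.commutes, toPauli_jj]
  ext i j
  fin_cases i <;> fin_cases j <;> simp [Matrix.algebraMap_matrix_apply]

lemma det_toPauli (c : ℂ) (v w : Fin 3 → ℝ) :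
    (toPauli (ofComplex c + (ι Q3 v + jj * ι Q3 w))).det =
      c ^ 2 - ⟨Q3 v - Q3 w, QuadraticMap.polar Q3 v w⟩ := by
  simp only [map_add, map_mul, toPauli_ofComplex, toPauli_ι, toPauli_jj, pauli_apply,
    Matrix.mul_fin_two, Matrix.of_add_of, Matrix.add_cons, Matrix.empty_add_empty,
    Matrix.head_cons, Matrix.tail_cons, Matrix.det_fin_two_of, Complex.mk_eq_add_mul_I, Q3_apply,
    polar_Q3, dotProduct, Fin.sum_univ_three]
  push_cast
  linear_combination
    ((v 1 + w 1 * Complex.I) ^ 2 - w 0 ^ 2 - w 1 ^ 2 - w 2 ^ 2 : ℂ) * Complex.I_sq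

lemma isUnit_ofComplex_add_iff (c : ℂ) (v w : Fin 3 → ℝ) :
    IsUnit (ofComplex c + (ι Q3 v + jj * ι Q3 w)) ↔
      c ^ 2 ≠ ⟨Q3 v - Q3 w, QuadraticMap.polar Q3 v w⟩ := by
  refine ⟨fun hM => ?_, fun hc => ?_⟩
  · rw [← sub_ne_zero, ← det_toPauli, ← isUnit_iff_ne_zero, ← Matrix.isUnit_iff_isUnit_det]
    exact hM.map toPauli
  · exact isUnit_add_of_mul_self_eq ofComplex (ι_add_jj_mul_ι_mul_self v w)
      (commute_ofComplex_ι_add_jj_mul_ι c v w) hc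

lemma smul_e_add_smul_e_add_smul_e (r₁ r₂ r₃ : ℝ) :
    r₁ • e 0 + r₂ • e 1 + r₃ • e 2 = ι Q3 ![r₁, r₂, r₃] := by
  simp only [e, ← map_smul, ← map_add]
  congr 1
  ext i
  fin_cases i <;> simp

/-- `M = a + v + jw + jt` in `Cl(ℝ³)` fails to be invertible iff `(v + jw)² = (a + jt)²`,
i.e. `a² + w² = v² + t²` and `at = v·w`. -/
theorem not_invertible_iff (a t v₁ v₂ v₃ w₁ w₂ w₃ : ℝ)
    (M : Cl3)
    (hM : M = algebraMap ℝ Cl3 a + (v₁ • e 0 + v₂ • e 1 + v₃ • e 2) +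
      jj * (w₁ • e 0 + w₂ • e 1 + w₃ • e 2) + t • jj) :
    (¬ ∃ N : Cl3, M * N = 1 ∧ N * M = 1) ↔
      (a ^ 2 + (w₁ ^ 2 + w₂ ^ 2 + w₃ ^ 2) = (v₁ ^ 2 + v₂ ^ 2 + v₃ ^ 2) + t ^ 2 ∧
        a * t = v₁ * w₁ + v₂ * w₂ + v₃ * w₃) := by
  have hM' :
      M = ofComplex ⟨a, t⟩ + (ι Q3 ![v₁, v₂, v₃] + jj * ι Q3 ![w₁, w₂, w₃]) := by
    rw [hM, smul_e_add_smul_e_add_smul_e, smul_e_add_smul_e_add_smul_e, ofComplex,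
      Complex.liftAux_apply]
    abel
  rw [← isUnit_iff_exists, hM', isUnit_ofComplex_add_iff, not_not, Complex.ext_iff]
  simp only [sq, Complex.mul_re, Complex.mul_im, Q3_apply, polar_Q3, dotProduct,
    Fin.sum_univ_three, Matrix.cons_val_zero, Matrix.cons_val_one, Matrix.cons_val]
  constructor <;> rintro ⟨h₁, h₂⟩ <;> constructor <;> linarith
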